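/- For every 2×2 integer matrix A there exists a matrix R ∈ SL(2,ℤ) such that tr(R·A) = 0. -/

import Mathlib

/-!
Euclid's algorithm, run with row and column operations from `SL(2, ℤ)`, brings `A` to a diagonal
matrix `D = U * A * V`. Then `R = V * S * U` works: `tr (R * A) = tr (S * D)`, and
`S = !![0, -1; 1, 0]` has trace-zero product with every symmetric matrix.
-/

open Matrix

open MatrixGroups ModularGroup Matrix.SpecialLinearGroup

local notation:1024 "↑ₘ" A:1024 => ((A : SL(2, ℤ)) : Matrix (Fin 2) (Fin 2) ℤ)

theorem isDiag_fin_two_iff {α : Type*} [Zero α] {A : Matrix (Fin 2) (Fin 2) α} :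
    A.IsDiag ↔ A 0 1 = 0 ∧ A 1 0 = 0 := by
  refine ⟨fun h ↦ ⟨h (by decide), h (by decide)⟩, fun ⟨h01, h10⟩ i j hij ↦ ?_⟩
  fin_cases i <;> fin_cases j <;> simp_all

theorem trace_S_mul_eq_zero_of_isSymm {R : Type*} [Ring R] {D : Matrix (Fin 2) (Fin 2) R}
    (hD : D.IsSymm) : (!![0, -1; 1, 0] * D).trace = 0 := by
  simp [trace_fin_two, vecMul, dotProduct, Fin.sum_univ_two, hD.apply 0 1]

theorem exists_SL2_mulVec_eq_gcd (v : Fin 2 → ℤ) :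
    ∃ U : SL(2, ℤ), ↑ₘU *ᵥ v = ![(Int.gcd (v 0) (v 1) : ℤ), 0] := by
  rcases Nat.eq_zero_or_pos (Int.gcd (v 0) (v 1)) with hg | hg
  · obtain ⟨h0, h1⟩ := Int.gcd_eq_zero_iff.mp hg
    refine ⟨1, ?_⟩
    ext i
    fin_cases i <;> simp [h0, h1]
  · obtain ⟨a, c, hac, ha, hc⟩ := Int.exists_gcd_one hg
    set g : ℤ := (Int.gcd (v 0) (v 1) : ℤ)
    obtain ⟨U, hU0, hU1⟩ :=
      (Int.isCoprime_iff_gcd_eq_one.mpr hac).symm.neg_left.exists_SL2_row 1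
    have hdet : U 0 0 * a + U 0 1 * c = 1 := by
      have := U.det_coe
      rw [det_fin_two, hU0, hU1] at this
      linear_combination this
    refine ⟨U, ?_⟩
    ext i
    fin_cases i <;> simp [mulVec, dotProduct, Fin.sum_univ_two, hU0, hU1]
    · linear_combination g * hdet + U 0 0 * ha + U 0 1 * hc
    · linear_combination -c * ha + a * hc

theorem exists_SL2_mul_apply_eq_gcd (M : Matrix (Fin 2) (Fin 2) ℤ) :
    ∃ U : SL(2, ℤ), (↑ₘU * M) 0 0 = Int.gcd (M 0 0) (M 1 0) ∧ (↑ₘU * M) 1 0 = 0 := by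
  obtain ⟨U, hU⟩ := exists_SL2_mulVec_eq_gcd (fun i ↦ M i 0)
  exact ⟨U, congrFun hU 0, congrFun hU 1⟩

theorem exists_SL2_mul_mul_isDiag_of_apply_one_zero (M : Matrix (Fin 2) (Fin 2) ℤ)
    (hM : M 1 0 = 0) : ∃ U V : SL(2, ℤ), (↑ₘU * M * ↑ₘV).IsDiag := by
  induction hn : (M 0 0).natAbs using Nat.strong_induction_on generalizing M with
  | _ n ih =>
  by_cases h0 : M 0 0 = 0
  -- the first column of `M` vanishes, hence so does the second column of `M * S`
  · obtain ⟨U, -, hU⟩ := exists_SL2_mul_apply_eq_gcd (M * ↑ₘS)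
    refine ⟨U, S, isDiag_fin_two_iff.mpr ⟨?_, by rwa [Matrix.mul_assoc]⟩⟩
    simp [mul_apply, Fin.sum_univ_two, h0, hM]
  by_cases hdvd : M 0 0 ∣ M 0 1
  · obtain ⟨k, hk⟩ := hdvd
    refine ⟨1, T ^ (-k), isDiag_fin_two_iff.mpr ⟨?_, ?_⟩⟩ <;>
      simp [coe_T_zpow, mul_apply, Fin.sum_univ_two, hk, hM]
  · obtain ⟨U, hU0, hU1⟩ := exists_SL2_mul_apply_eq_gcd Mᵀ
    -- clearing the first column of `Mᵀ` leaves a proper divisor of `M 0 0` in the corner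
    have hlt : ((↑ₘU * Mᵀ) 0 0).natAbs < n := by
      rw [hU0, Int.natAbs_natCast, ← hn]
      exact (Int.gcd_le_natAbs_left _ h0).lt_of_ne (mt Int.gcd_eq_natAbs_left_iff_dvd.mp hdvd)
    obtain ⟨V, W, hD⟩ := ih _ hlt _ hU1 rfl
    refine ⟨Wᵀ, (V * U)ᵀ, ?_⟩
    convert hD.transpose using 1
    simp [coe_mul, coe_transpose, transpose_mul, Matrix.mul_assoc]

theorem exists_SL2_mul_mul_isDiag (M : Matrix (Fin 2) (Fin 2) ℤ) :
    ∃ U V : SL(2, ℤ), (↑ₘU * M * ↑ₘV).IsDiag := by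
  obtain ⟨U, -, hU⟩ := exists_SL2_mul_apply_eq_gcd M
  obtain ⟨W, V, hD⟩ := exists_SL2_mul_mul_isDiag_of_apply_one_zero _ hU
  exact ⟨W * U, V, by simpa [coe_mul, Matrix.mul_assoc] using hD⟩

theorem exists_SL2_trace_mul_eq_zero (A : Matrix (Fin 2) (Fin 2) ℤ) :
    ∃ R : Matrix.SpecialLinearGroup (Fin 2) ℤ,
      ((R : Matrix (Fin 2) (Fin 2) ℤ) * A).trace = 0 := by
  obtain ⟨U, V, hD⟩ := exists_SL2_mul_mul_isDiag A
  refine ⟨V * S * U, ?_⟩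
  calc (↑ₘ(V * S * U) * A).trace = (↑ₘS * (↑ₘU * A * ↑ₘV)).trace := by
        rw [coe_mul, coe_mul, Matrix.mul_assoc, Matrix.mul_assoc, trace_mul_comm,
          Matrix.mul_assoc, Matrix.mul_assoc]
    _ = 0 := by rw [coe_S]; exact trace_S_mul_eq_zero_of_isSymm hD.isSymm
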